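/- For a band graph G° obtained from a snake graph by glueing, every good perfect matching of G° has exactly d edges, where d is the number of tiles of G°. -/

import Mathlib

/- Combinatorial model of abstract snake graphs and band graphs
   (Canakci–Schiffler, "Snake graph calculus III").
   Tiles are unit squares in the integer grid; a snake graph is a finite
   sequence of tiles, consecutive tiles glued north/south or east/west. -/

open scoped Classical
open Finset

noncomputable section

abbrev GV := ℤ × ℤ
abbrev GE := Sym2 (ℤ × ℤ)

/-- the south edge of the unit tile whose south-west corner is `p` -/
def south (p : GV) : GE := s(p, p + (1, 0))
/-- the north edge of the unit tile whose south-west corner is `p` -/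
def north (p : GV) : GE := s(p + (0, 1), p + (1, 1))
/-- the west edge of the unit tile whose south-west corner is `p` -/
def west (p : GV) : GE := s(p, p + (0, 1))
/-- the east edge of the unit tile whose south-west corner is `p` -/
def east (p : GV) : GE := s(p + (1, 0), p + (1, 1))

def tileVerts (p : GV) : Finset GV := {p, p + (1, 0), p + (0, 1), p + (1, 1)}
def tileEdges (p : GV) : Finset GE := {south p, north p, west p, east p}

/-- An (abstract) snake graph: a sequence of `d ≥ 1` tiles in the plane,
each consecutive tile glued to the north or to the east of the previous one. -/
structure SnakeGraph where
  d : ℕ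
  pos : ℕ → GV
  one_le : 1 ≤ d
  step : ∀ i, i + 1 < d →
    pos (i + 1) = pos i + (0, 1) ∨ pos (i + 1) = pos i + (1, 0)

namespace SnakeGraph
variable (G : SnakeGraph)

def verts : Finset GV := (Finset.range G.d).biUnion fun i => tileVerts (G.pos i)

def edges : Finset GE := (Finset.range G.d).biUnion fun i => tileEdges (G.pos i)

/-- edges contained in two tiles -/
def interiorEdges : Finset GE := G.edges.filter fun e =>
  ∃ i < G.d, ∃ j < G.d, i ≠ j ∧ e ∈ tileEdges (G.pos i) ∧ e ∈ tileEdges (G.pos j)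

def boundaryEdges : Finset GE := G.edges \ G.interiorEdges

/-- a perfect matching: a set of edges covering each vertex exactly once -/
def IsPerfectMatching (M : Finset GE) : Prop :=
  M ⊆ G.edges ∧ ∀ v ∈ G.verts, ∃! e, e ∈ M ∧ v ∈ e

/-- the (finite) set of all perfect matchings of `G` -/
def matchings : Finset (Finset GE) :=
  G.edges.powerset.filter fun M => G.IsPerfectMatching M

/-- a sign function on the edges of `G` (`true` = `+`, `false` = `-`):
on every tile, north and west agree, south and east agree,
and north is opposite to south. -/
def IsSignFn (f : GE → Bool) : Prop :=
  ∀ i < G.d,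
    f (north (G.pos i)) = f (west (G.pos i)) ∧
    f (south (G.pos i)) = f (east (G.pos i)) ∧
    f (north (G.pos i)) ≠ f (south (G.pos i))

/-- the interior edge shared by tiles `i` and `i+1` -/
def sharedEdge (i : ℕ) : GE :=
  if G.pos (i + 1) = G.pos i + (0, 1) then north (G.pos i) else east (G.pos i)

/-- north-or-east boundary edges -/
def NEset : Finset GE := G.boundaryEdges.filter fun e =>
  ∃ i < G.d, e = north (G.pos i) ∨ e = east (G.pos i)

/-- south-or-west boundary edges -/
def SWset : Finset GE := G.boundaryEdges.filter fun e =>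
  ∃ i < G.d, e = south (G.pos i) ∨ e = west (G.pos i)

end SnakeGraph

/-- the horizontal unit edge from `(a, j)` to `(a+1, j)` -/
def hEdge (a j : ℤ) : GE := s(((a, j) : GV), ((a + 1, j) : GV))

/-- Tile `i` is enclosed by the union of cycles `P ∆ Q`: the number of
horizontal edges of `P ∆ Q` lying in the column of tile `i` at height at most
the height of the tile is odd (a planar parity test). -/
def SnakeGraph.encl (G : SnakeGraph) (P Q : Finset GE) (i : ℕ) : Prop :=
  Odd (((symmDiff P Q).filter fun e =>
    ∃ j : ℤ, j ≤ (G.pos i).2 ∧ e = hEdge (G.pos i).1 j)).card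

/-- the rank (height) of a perfect matching `P` relative to the minimal matching `Q`:
the number of tiles enclosed by `P ∆ Q` -/
def SnakeGraph.rank (G : SnakeGraph) (Q P : Finset GE) : ℕ :=
  ((Finset.range G.d).filter fun i => G.encl P Q i).card

/-- The standard sign function on all grid edges; on every snake graph it
restricts to a sign function (the other one being its negation). -/
def stdSign : GE → Bool :=
  Sym2.lift ⟨fun u v =>
    if u.2 = v.2 then decide ((min u.1 v.1 + u.2) % 2 = 0)
    else decide ((min u.1 v.1 + min u.2 v.2) % 2 = 1),
    by
      intro u v
      rcases eq_or_ne u.2 v.2 with h | h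
      · simp [h, min_comm]
      · simp [h, Ne.symm h, min_comm]⟩

/-- An (abstract) band graph: a snake graph together with the choice of a
glueing edge `b` in the south-west of the first tile (`bSouth`) and of the
edge `b'` in the north-east of the last tile (`bNorth`), required to have the
same sign; the band graph itself is the quotient graph identifying `b` and
`b'` (see `glueMap`, `bandVerts`, `bandEdges` below). -/
structure BandGraph where
  G : SnakeGraph
  bSouth : Bool
  bNorth : Bool
  compat :
    stdSign (if bSouth then south (G.pos 0) else west (G.pos 0)) =
      stdSign (if bNorth then north (G.pos (G.d - 1)) else east (G.pos (G.d - 1)))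

namespace BandGraph
variable (B : BandGraph)

/-- the glueing edge `b` of the first tile -/
def bEdge : GE := if B.bSouth then south (B.G.pos 0) else west (B.G.pos 0)
/-- the glueing edge `b'` of the last tile -/
def bEdge' : GE := if B.bNorth then north (B.G.pos (B.G.d - 1)) else east (B.G.pos (B.G.d - 1))

/-- the south-west corner `x` of the first tile (an endpoint of `b`) -/
def xx : GV := B.G.pos 0
/-- the other endpoint `y` of `b` -/
def yy : GV := if B.bSouth then B.G.pos 0 + (1, 0) else B.G.pos 0 + (0, 1)
/-- the north-east corner `y'` of the last tile (an endpoint of `b'`) -/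
def yy' : GV := B.G.pos (B.G.d - 1) + (1, 1)
/-- the other endpoint `x'` of `b'` -/
def xx' : GV := if B.bNorth then B.G.pos (B.G.d - 1) + (0, 1) else B.G.pos (B.G.d - 1) + (1, 0)

def glueStep : GV → GV := fun z => if z = B.xx' then B.xx else if z = B.yy' then B.yy else z

/-- the identification `x' ↦ x`, `y' ↦ y` glueing the snake graph into the band graph -/
def glueMap : GV → GV := fun z => B.glueStep (B.glueStep z)

def bandVerts : Finset GV := B.G.verts.image B.glueMap
def bandEdges : Finset GE := B.G.edges.image (Sym2.map B.glueMap)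
/-- the glueing edge `b = b'` of the band graph -/
def glueEdge : GE := Sym2.map B.glueMap B.bEdge'
/-- the interior edges of the band graph: those of the snake graph plus the glueing edge -/
def bandInteriorEdges : Finset GE :=
  insert B.glueEdge (B.G.interiorEdges.image (Sym2.map B.glueMap))
def bandBoundaryEdges : Finset GE := B.bandEdges \ B.bandInteriorEdges

/-- perfect matchings of the band graph -/
def IsBandPM (M : Finset GE) : Prop :=
  M ⊆ B.bandEdges ∧ ∀ v ∈ B.bandVerts, ∃! e, e ∈ M ∧ v ∈ e

/-- good perfect matchings: those obtained by cutting the band graph along an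
interior edge, i.e. perfect matchings using at least one interior edge. -/
def IsGoodPM (M : Finset GE) : Prop :=
  B.IsBandPM M ∧ ∃ e ∈ B.bandInteriorEdges, e ∈ M

def goodMatchings : Finset (Finset GE) :=
  B.bandEdges.powerset.filter fun M => B.IsGoodPM M

/-- the rank of a good matching `P` relative to a base good matching `Q` -/
def rank (Q P : Finset GE) : ℕ :=
  ((Finset.range B.G.d).filter fun i => B.G.encl P Q i).card

/-- the number of interior edges of the band graph of sign `+` -/
def plusCount : ℕ :=
  ((Finset.range (B.G.d - 1)).filter fun i => stdSign (B.G.sharedEdge i) = true).card +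
    (if stdSign B.bEdge = true then 1 else 0)

/-- the number of interior edges of the band graph of sign `-` -/
def minusCount : ℕ :=
  ((Finset.range (B.G.d - 1)).filter fun i => stdSign (B.G.sharedEdge i) = false).card +
    (if stdSign B.bEdge = false then 1 else 0)

end BandGraph

/- The level `v.1 + v.2` of a grid point rises by one along every edge of a tile, and tile `i` of a
snake graph sits between levels `ℓ + i` and `ℓ + i + 2`. Hence each new tile adds exactly two
corners and a snake graph with `d` tiles has `2d + 2` vertices. For `d ≥ 2` the glueing
`x' ↦ x`, `y' ↦ y` lowers levels by `0` or `d`, so the band graph has `2d` vertices and no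
loops, and a perfect matching has `d` edges. For `d = 1` the sign condition forces `y = x'`:
every edge of the band graph passes through `x`, and a perfect matching is a single edge. -/

section Matching

variable {α : Type*} {V : Finset α} {M : Finset (Sym2 α)}

theorem card_eq_two_mul_card_of_existsUnique [DecidableEq α] (hloop : ∀ e ∈ M, ¬ e.IsDiag)
    (hsub : ∀ e ∈ M, ∀ v ∈ e, v ∈ V) (huniq : ∀ v ∈ V, ∃! e, e ∈ M ∧ v ∈ e) :
    #V = 2 * #M := by
  have hV : V = M.biUnion Sym2.toFinset := by
    ext v
    simp only [mem_biUnion, Sym2.mem_toFinset]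
    exact ⟨fun hv => (huniq v hv).exists, fun ⟨e, he, hve⟩ => hsub e he v hve⟩
  have hdisj : (M : Set (Sym2 α)).PairwiseDisjoint Sym2.toFinset := by
    intro e he e' he' hne
    refine Finset.disjoint_left.2 fun v hv hv' => hne ?_
    rw [Sym2.mem_toFinset] at hv hv'
    exact (huniq v (hsub e he v hv)).unique ⟨he, hv⟩ ⟨he', hv'⟩
  rw [hV, card_biUnion hdisj,
    sum_congr rfl fun e he => Sym2.card_toFinset_of_not_isDiag e (hloop e he), sum_const,
    smul_eq_mul, mul_comm]

theorem card_eq_one_of_forall_mem {v : α} (hv : v ∈ V) (hvM : ∀ e ∈ M, v ∈ e)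
    (huniq : ∀ v ∈ V, ∃! e, e ∈ M ∧ v ∈ e) : #M = 1 := by
  obtain ⟨e, ⟨he, -⟩, hunique⟩ := huniq v hv
  exact card_eq_one.2
    ⟨e, eq_singleton_iff_unique_mem.2 ⟨he, fun e' he' => hunique e' ⟨he', hvM e' he'⟩⟩⟩

end Matching

def level (v : GV) : ℤ := v.1 + v.2

@[simp] lemma level_add (v w : GV) : level (v + w) = level v + level w := by
  simp only [level, Prod.fst_add, Prod.snd_add]; ring

@[simp] lemma level_one_zero : level (1, 0) = 1 := rfl
@[simp] lemma level_zero_one : level (0, 1) = 1 := rfl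
@[simp] lemma level_one_one : level (1, 1) = 2 := rfl

lemma ne_of_level_ne {v w : GV} (h : level v ≠ level w) : v ≠ w := fun hvw => h (hvw ▸ rfl)

lemma level_le_of_mem_tileVerts {v p : GV} (hv : v ∈ tileVerts p) : level v ≤ level p + 2 := by
  simp only [tileVerts, mem_insert, mem_singleton] at hv
  rcases hv with rfl | rfl | rfl | rfl <;> simp

lemma eq_of_mem_tileVerts_of_level_le {v p : GV} (hv : v ∈ tileVerts p)
    (hl : level v ≤ level p) : v = p := by
  simp only [tileVerts, mem_insert, mem_singleton] at hv
  rcases hv with rfl | rfl | rfl | rfl <;> simp at hl ⊢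

lemma exists_eq_of_mem_tileEdges {e : GE} {p : GV} (he : e ∈ tileEdges p) :
    ∃ a b, e = s(a, b) ∧ a ∈ tileVerts p ∧ b ∈ tileVerts p ∧ level b = level a + 1 := by
  simp only [tileEdges, mem_insert, mem_singleton] at he
  rcases he with rfl | rfl | rfl | rfl
  · exact ⟨p, p + (1, 0), rfl, by simp [tileVerts], by simp [tileVerts], by simp⟩
  · refine ⟨p + (0, 1), p + (1, 1), rfl, by simp [tileVerts], by simp [tileVerts], ?_⟩
    simp; ring
  · exact ⟨p, p + (0, 1), rfl, by simp [tileVerts], by simp [tileVerts], by simp⟩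
  · refine ⟨p + (1, 0), p + (1, 1), rfl, by simp [tileVerts], by simp [tileVerts], ?_⟩
    simp; ring

lemma card_tileVerts_add_sdiff (p : GV) {c : GV} (hc : c = (0, 1) ∨ c = (1, 0)) :
    #(tileVerts (p + c) \ tileVerts p) = 2 := by
  rcases hc with rfl | rfl
  · have : tileVerts (p + (0, 1)) \ tileVerts p = {p + (0, 2), p + (1, 2)} := by
      ext v; simp [tileVerts, Prod.ext_iff]; omega
    rw [this, card_pair (by simp [Prod.ext_iff])]
  · have : tileVerts (p + (1, 0)) \ tileVerts p = {p + (2, 0), p + (2, 1)} := by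
      ext v; simp [tileVerts, Prod.ext_iff]; omega
    rw [this, card_pair (by simp [Prod.ext_iff])]

namespace SnakeGraph

variable (G : SnakeGraph)

lemma level_pos {i : ℕ} (hi : i < G.d) : level (G.pos i) = level (G.pos 0) + i := by
  induction i with
  | zero => simp
  | succ n ih =>
    rcases G.step n hi with h | h <;> rw [h, level_add, ih (by omega)] <;> simp <;> ring

lemma level_pos_d_sub_one : level (G.pos (G.d - 1)) = level (G.pos 0) + G.d - 1 := by
  rw [G.level_pos (by have := G.one_le; omega), Nat.cast_sub G.one_le]
  ring

lemma mem_verts {v : GV} : v ∈ G.verts ↔ ∃ i < G.d, v ∈ tileVerts (G.pos i) := by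
  simp [verts]

/-- The only corner of tile `n + 1` of level at most `level (pos 0) + n + 1` is its south-west
corner, which lies on tile `n`. -/
lemma mem_tileVerts_of_mem_tileVerts_succ {n j : ℕ} (hn : n + 1 < G.d) (hj : j ≤ n) {v : GV}
    (hv : v ∈ tileVerts (G.pos (n + 1))) (hvj : v ∈ tileVerts (G.pos j)) :
    v ∈ tileVerts (G.pos n) := by
  rcases hj.eq_or_lt with rfl | hjn
  · exact hvj
  have hlj := G.level_pos (i := j) (by omega)
  have hln := G.level_pos hn
  have := level_le_of_mem_tileVerts hvj
  obtain rfl : v = G.pos (n + 1) := eq_of_mem_tileVerts_of_level_le hv (by push_cast at hln; omega)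
  rcases G.step n hn with h | h <;> rw [h] <;> simp [tileVerts]

lemma card_biUnion_range_tileVerts {n : ℕ} (hn : n < G.d) :
    #((range (n + 1)).biUnion fun i => tileVerts (G.pos i)) = 2 * n + 4 := by
  induction n with
  | zero => simp [tileVerts, Prod.ext_iff]
  | succ n ih =>
    set U := (range (n + 1)).biUnion fun i => tileVerts (G.pos i)
    have hsdiff :
        tileVerts (G.pos (n + 1)) \ U = tileVerts (G.pos (n + 1)) \ tileVerts (G.pos n) := by
      ext v
      simp only [U, mem_sdiff, mem_biUnion, mem_range, not_exists, not_and]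
      refine and_congr_right fun hv => ⟨fun h => h n (by omega), fun h j hj hvj => ?_⟩
      exact h (G.mem_tileVerts_of_mem_tileVerts_succ hn (by omega) hv hvj)
    obtain ⟨c, hc, hpos⟩ :
        ∃ c : GV, (c = (0, 1) ∨ c = (1, 0)) ∧ G.pos (n + 1) = G.pos n + c := by
      rcases G.step n hn with h | h
      exacts [⟨_, Or.inl rfl, h⟩, ⟨_, Or.inr rfl, h⟩]
    rw [range_add_one, biUnion_insert, ← card_sdiff_add_card, hsdiff, ih (by omega), hpos,
      card_tileVerts_add_sdiff _ hc]
    ring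

lemma card_verts : #G.verts = 2 * G.d + 2 := by
  have h := G.card_biUnion_range_tileVerts (n := G.d - 1) (by have := G.one_le; omega)
  rw [Nat.sub_add_cancel G.one_le] at h
  rw [verts, h]
  have := G.one_le
  omega

end SnakeGraph

lemma stdSign_west (p : GV) : stdSign (west p) = !stdSign (south p) := by
  norm_num [stdSign, west, south]
  rw [← decide_not, decide_eq_decide]; omega

lemma stdSign_north (p : GV) : stdSign (north p) = !stdSign (south p) := by
  norm_num [stdSign, north, south]
  rw [← decide_not, decide_eq_decide]; omega

lemma stdSign_east (p : GV) : stdSign (east p) = stdSign (south p) := by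
  norm_num [stdSign, east, south]
  omega

namespace BandGraph

variable (B : BandGraph)

lemma level_yy : level B.yy = level B.xx + 1 := by
  rw [yy, xx]; split <;> simp

lemma level_xx' : level B.xx' = level B.xx + B.G.d := by
  rw [xx', xx]; split <;> simp [B.G.level_pos_d_sub_one]

lemma level_yy' : level B.yy' = level B.xx + B.G.d + 1 := by
  rw [yy', xx]; simp [B.G.level_pos_d_sub_one]; ring

lemma glueStep_of_ne {z : GV} (hx : z ≠ B.xx') (hy : z ≠ B.yy') : B.glueStep z = z := by
  rw [glueStep, if_neg hx, if_neg hy]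

lemma glueStep_xx' : B.glueStep B.xx' = B.xx := if_pos rfl

lemma glueStep_yy' : B.glueStep B.yy' = B.yy := by
  rw [glueStep, if_neg (ne_of_level_ne (by simp [level_xx', level_yy'])), if_pos rfl]

lemma glueStep_xx : B.glueStep B.xx = B.xx := by
  have := B.G.one_le
  exact B.glueStep_of_ne (ne_of_level_ne (by rw [level_xx']; omega))
    (ne_of_level_ne (by rw [level_yy']; omega))

lemma glueStep_yy (h2 : 2 ≤ B.G.d) : B.glueStep B.yy = B.yy :=
  B.glueStep_of_ne (ne_of_level_ne (by rw [level_yy, level_xx']; omega))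
    (ne_of_level_ne (by rw [level_yy, level_yy']; omega))

lemma glueStep_cases (z : GV) :
    (z = B.xx' ∧ B.glueStep z = B.xx) ∨ (z = B.yy' ∧ B.glueStep z = B.yy) ∨
      (z ≠ B.xx' ∧ z ≠ B.yy' ∧ B.glueStep z = z) := by
  by_cases hx : z = B.xx'
  · exact Or.inl ⟨hx, hx ▸ B.glueStep_xx'⟩
  by_cases hy : z = B.yy'
  · exact Or.inr (Or.inl ⟨hy, hy ▸ B.glueStep_yy'⟩)
  · exact Or.inr (Or.inr ⟨hx, hy, B.glueStep_of_ne hx hy⟩)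

lemma glueMap_eq_glueStep (h2 : 2 ≤ B.G.d) : B.glueMap = B.glueStep := by
  funext z
  rcases B.glueStep_cases z with ⟨-, h⟩ | ⟨-, h⟩ | ⟨-, -, h⟩ <;> rw [glueMap, h]
  exacts [B.glueStep_xx, B.glueStep_yy h2, h]

lemma level_glueStep (z : GV) :
    level (B.glueStep z) = level z ∨ level (B.glueStep z) = level z - B.G.d := by
  rcases B.glueStep_cases z with ⟨rfl, h⟩ | ⟨rfl, h⟩ | ⟨-, -, h⟩ <;> rw [h]
  · simp [level_xx']
  · rw [level_yy, level_yy']; right; ring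
  · simp

lemma glueStep_ne_of_level_eq_add_one (h2 : 2 ≤ B.G.d) {a b : GV} (hab : level b = level a + 1) :
    B.glueStep a ≠ B.glueStep b := by
  intro h
  have ha := B.level_glueStep a
  have hb := B.level_glueStep b
  rw [h] at ha
  omega

lemma xx_mem_verts : B.xx ∈ B.G.verts :=
  B.G.mem_verts.2 ⟨0, B.G.one_le, by simp [xx, tileVerts]⟩

lemma yy_mem_verts : B.yy ∈ B.G.verts :=
  B.G.mem_verts.2 ⟨0, B.G.one_le, by rw [yy]; split <;> simp [tileVerts]⟩

lemma xx'_mem_verts : B.xx' ∈ B.G.verts :=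
  B.G.mem_verts.2
    ⟨B.G.d - 1, by have := B.G.one_le; omega, by rw [xx']; split <;> simp [tileVerts]⟩

lemma yy'_mem_verts : B.yy' ∈ B.G.verts :=
  B.G.mem_verts.2 ⟨B.G.d - 1, by have := B.G.one_le; omega, by simp [yy', tileVerts]⟩

lemma bandVerts_eq_sdiff (h2 : 2 ≤ B.G.d) : B.bandVerts = B.G.verts \ {B.xx', B.yy'} := by
  have := B.level_yy; have := B.level_xx'; have := B.level_yy'
  ext v
  simp only [bandVerts, B.glueMap_eq_glueStep h2, mem_image, mem_sdiff, mem_insert,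
    mem_singleton, not_or]
  constructor
  · rintro ⟨u, hu, rfl⟩
    rcases B.glueStep_cases u with ⟨-, h⟩ | ⟨-, h⟩ | ⟨hx, hy, h⟩ <;> rw [h]
    · exact ⟨B.xx_mem_verts, ne_of_level_ne (by omega), ne_of_level_ne (by omega)⟩
    · exact ⟨B.yy_mem_verts, ne_of_level_ne (by omega), ne_of_level_ne (by omega)⟩
    · exact ⟨hu, hx, hy⟩
  · rintro ⟨hv, hx, hy⟩
    exact ⟨v, hv, B.glueStep_of_ne hx hy⟩

lemma card_bandVerts (h2 : 2 ≤ B.G.d) : #B.bandVerts = 2 * B.G.d := by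
  have hsub : {B.xx', B.yy'} ⊆ B.G.verts := by
    simp [insert_subset_iff, B.xx'_mem_verts, B.yy'_mem_verts]
  have hne : B.xx' ≠ B.yy' := ne_of_level_ne (by simp [level_xx', level_yy'])
  rw [B.bandVerts_eq_sdiff h2, card_sdiff_of_subset hsub, B.G.card_verts, card_pair hne]
  omega

lemma mem_bandVerts_of_mem_bandEdges {e : GE} (he : e ∈ B.bandEdges) {v : GV} (hv : v ∈ e) :
    v ∈ B.bandVerts := by
  obtain ⟨e₀, he₀, rfl⟩ := mem_image.1 he
  obtain ⟨w, hw, rfl⟩ := Sym2.mem_map.1 hv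
  obtain ⟨i, hi, hie⟩ := mem_biUnion.1 he₀
  obtain ⟨a, b, rfl, ha, hb, -⟩ := exists_eq_of_mem_tileEdges hie
  refine mem_image_of_mem _ (B.G.mem_verts.2 ⟨i, mem_range.1 hi, ?_⟩)
  rcases Sym2.mem_iff.1 hw with rfl | rfl
  exacts [ha, hb]

lemma not_isDiag_of_mem_bandEdges (h2 : 2 ≤ B.G.d) {e : GE} (he : e ∈ B.bandEdges) :
    ¬ e.IsDiag := by
  obtain ⟨e₀, he₀, rfl⟩ := mem_image.1 he
  obtain ⟨i, -, hie⟩ := mem_biUnion.1 he₀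
  obtain ⟨a, b, rfl, -, -, hab⟩ := exists_eq_of_mem_tileEdges hie
  rw [Sym2.map_mk, Sym2.mk_isDiag_iff, B.glueMap_eq_glueStep h2]
  exact B.glueStep_ne_of_level_eq_add_one h2 hab

lemma glueMap_xx : B.glueMap B.xx = B.xx := by
  rw [glueMap, glueStep_xx, glueStep_xx]

lemma xx_mem_bandVerts : B.xx ∈ B.bandVerts :=
  mem_image.2 ⟨B.xx, B.xx_mem_verts, B.glueMap_xx⟩

/-- The sign condition rules out `b` and `b'` being opposite sides of the single tile. -/
lemma yy_eq_xx'_of_d_eq_one (h1 : B.G.d = 1) : B.yy = B.xx' := by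
  have hc := B.compat
  simp only [h1, Nat.sub_self] at hc
  simp only [yy, xx', h1, Nat.sub_self]
  cases hS : B.bSouth <;> cases hN : B.bNorth <;>
    simp_all [stdSign_west, stdSign_north, stdSign_east]

lemma glueMap_yy'_of_d_eq_one (h1 : B.G.d = 1) : B.glueMap B.yy' = B.xx := by
  rw [glueMap, glueStep_yy', B.yy_eq_xx'_of_d_eq_one h1, glueStep_xx']

/-- Every side of the single tile contains `x` or `y'`, and both are glued to `x`. -/
lemma xx_mem_of_mem_bandEdges_of_d_eq_one (h1 : B.G.d = 1) {e : GE} (he : e ∈ B.bandEdges) :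
    B.xx ∈ e := by
  obtain ⟨e₀, he₀, rfl⟩ := mem_image.1 he
  obtain ⟨i, hi, hie⟩ := mem_biUnion.1 he₀
  obtain rfl : i = 0 := by rw [mem_range] at hi; omega
  have hcorner : B.xx ∈ e₀ ∨ B.yy' ∈ e₀ := by
    have hyy' : B.yy' = B.G.pos 0 + (1, 1) := by simp [yy', h1]
    simp only [tileEdges, mem_insert, mem_singleton] at hie
    rcases hie with rfl | rfl | rfl | rfl <;> simp [hyy', xx, south, north, west, east]
  rcases hcorner with h | h
  · exact B.glueMap_xx ▸ Sym2.mem_map.2 ⟨_, h, rfl⟩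
  · exact B.glueMap_yy'_of_d_eq_one h1 ▸ Sym2.mem_map.2 ⟨_, h, rfl⟩

end BandGraph

lemma BandGraph.IsBandPM.card_eq_of_two_le {B : BandGraph} {M : Finset GE} (hM : B.IsBandPM M)
    (h2 : 2 ≤ B.G.d) : #M = B.G.d := by
  have h := card_eq_two_mul_card_of_existsUnique
    (fun e he => B.not_isDiag_of_mem_bandEdges h2 (hM.1 he))
    (fun e he _ hv => B.mem_bandVerts_of_mem_bandEdges (hM.1 he) hv) hM.2
  rw [B.card_bandVerts h2] at h
  omega

lemma BandGraph.IsBandPM.card_eq {B : BandGraph} {M : Finset GE} (hM : B.IsBandPM M) :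
    #M = B.G.d := by
  rcases B.G.one_le.eq_or_lt with h1 | h2
  · rw [← h1]
    exact card_eq_one_of_forall_mem B.xx_mem_bandVerts
      (fun e he => B.xx_mem_of_mem_bandEdges_of_d_eq_one h1.symm (hM.1 he)) hM.2
  · exact hM.card_eq_of_two_le h2

/-- every good perfect matching of a band graph with `d` tiles
has exactly `d` edges. -/
theorem good_matching_card (B : BandGraph) (M : Finset GE)
    (hM : B.IsGoodPM M) : M.card = B.G.d :=
  hM.1.card_eq
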